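/- arXiv:2308.16885 — 3 statements merged into one kernel-verified Lean document; each statement's English description precedes it below -/
import Mathlib

section
/- Let r be a positive integer, let (x1,y1), (x2,y2), (x3,y3) be distinct points of D_r = {(x,y) in Z^2 : x^2 + y^2 = r^2}, and let a, b be real numbers such that x1*a + y1*b ≡ x2*a + y2*b ≡ x3*a + y3*b (mod 1). Then there exist integers p_a, q_a, p_b, q_b with a = p_a/q_a, b = p_b/q_b, and 1 ≤ q_a, q_b ≤ 8r^2. -/
theorem stmt5 (r : ℕ) (hr : 0 < r) (x1 y1 x2 y2 x3 y3 : ℤ)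
    (h1 : x1 ^ 2 + y1 ^ 2 = (r : ℤ) ^ 2)
    (h2 : x2 ^ 2 + y2 ^ 2 = (r : ℤ) ^ 2)
    (h3 : x3 ^ 2 + y3 ^ 2 = (r : ℤ) ^ 2)
    (h12 : (x1, y1) ≠ (x2, y2)) (h13 : (x1, y1) ≠ (x3, y3)) (h23 : (x2, y2) ≠ (x3, y3))
    (a b : ℝ)
    (hab12 : ∃ k : ℤ, (x1 * a + y1 * b) - (x2 * a + y2 * b) = k)
    (hab13 : ∃ k : ℤ, (x1 * a + y1 * b) - (x3 * a + y3 * b) = k) :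
    ∃ pa qa pb qb : ℤ, a = (pa : ℝ) / qa ∧ b = (pb : ℝ) / qb ∧
      1 ≤ qa ∧ qa ≤ 8 * (r : ℤ) ^ 2 ∧ 1 ≤ qb ∧ qb ≤ 8 * (r : ℤ) ^ 2 := by
  obtain ⟨k1, hk1⟩ := hab12
  obtain ⟨k2, hk2⟩ := hab13
  simp only [ne_eq, Prod.mk.injEq, not_and_or] at h12 h13 h23
  have hr' : (0 : ℤ) < (r : ℤ) := by exact_mod_cast hr
  -- determinant is nonzero
  have hDne : (x1 - x2) * (y1 - y3) - (x1 - x3) * (y1 - y2) ≠ 0 := by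
    intro hD0
    have A : (x1 - x2) * (x1 + x2) + (y1 - y2) * (y1 + y2) = 0 := by
      linear_combination h1 - h2
    have B : (x1 - x3) * (x1 + x3) + (y1 - y3) * (y1 + y3) = 0 := by
      linear_combination h1 - h3
    have E : (x1 - x2) * (x1 + x3) + (y1 - y2) * (y1 + y3) = 0 := by
      rcases h13 with h | h
      · have h' : (x1 - x3) * ((x1 - x2) * (x1 + x3) + (y1 - y2) * (y1 + y3)) = 0 := by
          linear_combination (x1 - x2) * B - (y1 + y3) * hD0
        rcases mul_eq_zero.mp h' with h'' | h''
        · exact absurd (by omega : x1 = x3) h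
        · exact h''
      · have h' : (y1 - y3) * ((x1 - x2) * (x1 + x3) + (y1 - y2) * (y1 + y3)) = 0 := by
          linear_combination (y1 - y2) * B + (x1 + x3) * hD0
        rcases mul_eq_zero.mp h' with h'' | h''
        · exact absurd (by omega : y1 = y3) h
        · exact h''
    have F : (x1 - x2) * (x3 - x2) + (y1 - y2) * (y3 - y2) = 0 := by
      linear_combination E - A
    have G : (x1 - x2) * (y3 - y2) - (y1 - y2) * (x3 - x2) = 0 := by
      linear_combination -hD0
    have usq : 0 < (x1 - x2) ^ 2 + (y1 - y2) ^ 2 := by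
      rcases h12 with h | h
      · have h' : x1 - x2 ≠ 0 := sub_ne_zero.mpr h
        positivity
      · have h' : y1 - y2 ≠ 0 := sub_ne_zero.mpr h
        positivity
    have w1 : ((x1 - x2) ^ 2 + (y1 - y2) ^ 2) * (x3 - x2) = 0 := by
      linear_combination (x1 - x2) * F - (y1 - y2) * G
    have w2 : ((x1 - x2) ^ 2 + (y1 - y2) ^ 2) * (y3 - y2) = 0 := by
      linear_combination (y1 - y2) * F + (x1 - x2) * G
    have hx : x3 - x2 = 0 := by
      rcases mul_eq_zero.mp w1 with h | h
      · omega
      · exact h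
    have hy : y3 - y2 = 0 := by
      rcases mul_eq_zero.mp w2 with h | h
      · omega
      · exact h
    rcases h23 with h | h <;> omega
  -- bounds on coordinates
  have hx1 : |x1| ≤ (r : ℤ) := by
    rw [abs_le]; constructor <;> nlinarith [sq_nonneg y1]
  have hx2 : |x2| ≤ (r : ℤ) := by
    rw [abs_le]; constructor <;> nlinarith [sq_nonneg y2]
  have hx3 : |x3| ≤ (r : ℤ) := by
    rw [abs_le]; constructor <;> nlinarith [sq_nonneg y3]
  have hy1 : |y1| ≤ (r : ℤ) := by
    rw [abs_le]; constructor <;> nlinarith [sq_nonneg x1]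
  have hy2 : |y2| ≤ (r : ℤ) := by
    rw [abs_le]; constructor <;> nlinarith [sq_nonneg x2]
  have hy3 : |y3| ≤ (r : ℤ) := by
    rw [abs_le]; constructor <;> nlinarith [sq_nonneg x3]
  rw [abs_le] at hx1 hx2 hx3 hy1 hy2 hy3
  have a1 : |x1 - x2| ≤ 2 * (r : ℤ) := by rw [abs_le]; omega
  have a2 : |y1 - y3| ≤ 2 * (r : ℤ) := by rw [abs_le]; omega
  have a3 : |x1 - x3| ≤ 2 * (r : ℤ) := by rw [abs_le]; omega
  have a4 : |y1 - y2| ≤ 2 * (r : ℤ) := by rw [abs_le]; omega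
  have m1 : |(x1 - x2) * (y1 - y3)| ≤ 4 * (r : ℤ) ^ 2 := by
    rw [abs_mul]
    calc |x1 - x2| * |y1 - y3| ≤ (2 * (r : ℤ)) * (2 * (r : ℤ)) :=
          mul_le_mul a1 a2 (abs_nonneg _) (by positivity)
      _ = 4 * (r : ℤ) ^ 2 := by ring
  have m2 : |(x1 - x3) * (y1 - y2)| ≤ 4 * (r : ℤ) ^ 2 := by
    rw [abs_mul]
    calc |x1 - x3| * |y1 - y2| ≤ (2 * (r : ℤ)) * (2 * (r : ℤ)) :=
          mul_le_mul a3 a4 (abs_nonneg _) (by positivity)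
      _ = 4 * (r : ℤ) ^ 2 := by ring
  have hDb : |(x1 - x2) * (y1 - y3) - (x1 - x3) * (y1 - y2)| ≤ 8 * (r : ℤ) ^ 2 := by
    calc |(x1 - x2) * (y1 - y3) - (x1 - x3) * (y1 - y2)|
        ≤ |(x1 - x2) * (y1 - y3)| + |(x1 - x3) * (y1 - y2)| := abs_sub _ _
      _ ≤ 4 * (r : ℤ) ^ 2 + 4 * (r : ℤ) ^ 2 := add_le_add m1 m2
      _ = 8 * (r : ℤ) ^ 2 := by ring
  rw [abs_le] at hDb
  have hDR : (((x1 - x2) * (y1 - y3) - (x1 - x3) * (y1 - y2) : ℤ) : ℝ) ≠ 0 :=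
    Int.cast_ne_zero.mpr hDne
  have key_a : (((x1 - x2) * (y1 - y3) - (x1 - x3) * (y1 - y2) : ℤ) : ℝ) * a
      = ((k1 * (y1 - y3) - k2 * (y1 - y2) : ℤ) : ℝ) := by
    push_cast
    linear_combination ((y1 : ℝ) - y3) * hk1 - ((y1 : ℝ) - y2) * hk2
  have key_b : (((x1 - x2) * (y1 - y3) - (x1 - x3) * (y1 - y2) : ℤ) : ℝ) * b
      = ((k2 * (x1 - x2) - k1 * (x1 - x3) : ℤ) : ℝ) := by
    push_cast
    linear_combination ((x1 : ℝ) - x2) * hk2 - ((x1 : ℝ) - x3) * hk1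
  rcases lt_or_gt_of_ne hDne with hneg | hpos
  · refine ⟨-(k1 * (y1 - y3) - k2 * (y1 - y2)),
      -((x1 - x2) * (y1 - y3) - (x1 - x3) * (y1 - y2)),
      -(k2 * (x1 - x2) - k1 * (x1 - x3)),
      -((x1 - x2) * (y1 - y3) - (x1 - x3) * (y1 - y2)),
      ?_, ?_, by omega, by omega, by omega, by omega⟩
    · rw [eq_div_iff (by push_cast at hDR ⊢; intro h; apply hDR; linarith)]
      push_cast at key_a ⊢
      linarith [key_a]
    · rw [eq_div_iff (by push_cast at hDR ⊢; intro h; apply hDR; linarith)]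
      push_cast at key_b ⊢
      linarith [key_b]
  · refine ⟨k1 * (y1 - y3) - k2 * (y1 - y2),
      (x1 - x2) * (y1 - y3) - (x1 - x3) * (y1 - y2),
      k2 * (x1 - x2) - k1 * (x1 - x3),
      (x1 - x2) * (y1 - y3) - (x1 - x3) * (y1 - y2),
      ?_, ?_, by omega, by omega, by omega, by omega⟩
    · rw [eq_div_iff hDR]
      push_cast at key_a ⊢
      linarith [key_a]
    · rw [eq_div_iff hDR]
      push_cast at key_b ⊢
      linarith [key_b]
end

section
/- For each positive integer r, the Cayley graph G(Z^3, C_r), where C_r = { ±((8r^2)!·d + j·d̃, j·r) : d ∈ D_r, j a positive integer }, is a subgraph of the graph on vertex set Z^3 in which (x,y,z) and (x',y',z') are adjacent if and only if (x-x')^2 + (y-y')^2 - (z-z')^2 = (r·(8r^2)!)^2. -/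
/-- The generating set `C_r ⊆ ℤ³`. -/
def Cgen (r : ℕ) : Set (ℤ × ℤ × ℤ) :=
  {v | ∃ d1 d2 : ℤ, ∃ j : ℤ, 0 < j ∧ d1 ^ 2 + d2 ^ 2 = (r : ℤ) ^ 2 ∧
    (v = ((Nat.factorial (8 * r ^ 2) : ℤ) * d1 - j * d2,
          (Nat.factorial (8 * r ^ 2) : ℤ) * d2 + j * d1, j * r) ∨
     v = -((Nat.factorial (8 * r ^ 2) : ℤ) * d1 - j * d2,
          (Nat.factorial (8 * r ^ 2) : ℤ) * d2 + j * d1, j * r))}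

theorem stmt7 (r : ℕ) (hr : 0 < r) (u v : ℤ × ℤ × ℤ) (h : u - v ∈ Cgen r) :
    (u.1 - v.1) ^ 2 + (u.2.1 - v.2.1) ^ 2 - (u.2.2 - v.2.2) ^ 2
      = ((r : ℤ) * (Nat.factorial (8 * r ^ 2) : ℤ)) ^ 2 := by
  obtain ⟨d1, d2, j, hj, hd, hc⟩ := h
  set M : ℤ := (Nat.factorial (8 * r ^ 2) : ℤ)
  have h1 : u.1 - v.1 = (u - v).1 := rfl
  have h2 : u.2.1 - v.2.1 = (u - v).2.1 := rfl
  have h3 : u.2.2 - v.2.2 = (u - v).2.2 := rfl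
  rw [h1, h2, h3]
  rcases hc with hc | hc <;> rw [hc] <;> simp only [Prod.fst_neg, Prod.snd_neg] <;> nlinarith [hd, sq_nonneg (M * d1 - j * d2)]
end

section
/- Let (a_n) and (b_n) be sequences of real numbers whose fractional parts converge to 0 (i.e., a_n → 0 and b_n → 0 in R/Z). Then liminf_{n→∞} (1/n) Σ_{j=1}^{n} ((n+1-j)/(n+1)) (e(a_n + j b_n) + e(-a_n - j b_n)) ≥ 0, where e(θ) = exp(2πiθ). -/
open Filter Finset Complex

-- double sum formula for even f
lemma evenSum (f : ℤ → ℝ) (hf : ∀ d, f (-d) = f d) : ∀ N : ℕ,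
    ∑ j ∈ Finset.range N, ∑ k ∈ Finset.range N, f ((j : ℤ) - k)
      = N * f 0 + ∑ d ∈ Finset.Icc 1 N, ((N : ℝ) - d) * (2 * f d) := by
  intro N
  induction N with
  | zero => simp
  | succ N ih =>
    have hrefl : ∀ (g : ℤ → ℝ), ∑ j ∈ Finset.range N, g ((N : ℤ) - j)
        = ∑ d ∈ Finset.Icc 1 N, g d := by
      intro g
      apply Finset.sum_nbij' (fun j => N - j) (fun d => N - d)
      · intro j hj
        simp only [Finset.mem_range] at hj
        simp only [Finset.mem_Icc]
        omega
      · intro d hd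
        simp only [Finset.mem_Icc] at hd
        simp only [Finset.mem_range]
        omega
      · intro j hj; simp only [Finset.mem_range] at hj; omega
      · intro d hd; simp only [Finset.mem_Icc] at hd; omega
      · intro j hj
        simp only [Finset.mem_range] at hj
        congr 1
        omega
    have key : ∑ j ∈ Finset.range (N+1), ∑ k ∈ Finset.range (N+1), f ((j : ℤ) - k)
        = (∑ j ∈ Finset.range N, ∑ k ∈ Finset.range N, f ((j : ℤ) - k))
          + f 0 + 2 * ∑ d ∈ Finset.Icc 1 N, f d := by
      rw [Finset.sum_range_succ]
      rw [Finset.sum_range_succ (f := fun k => f ((N : ℤ) - k))]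
      have : ∀ j ∈ Finset.range N, ∑ k ∈ Finset.range (N+1), f ((j : ℤ) - k)
          = ∑ k ∈ Finset.range N, f ((j : ℤ) - k) + f ((j : ℤ) - N) := by
        intro j _; rw [Finset.sum_range_succ]
      rw [Finset.sum_congr rfl this, Finset.sum_add_distrib]
      have h1 : ∑ j ∈ Finset.range N, f ((j : ℤ) - N) = ∑ d ∈ Finset.Icc 1 N, f d := by
        rw [← hrefl]
        apply Finset.sum_congr rfl
        intro j _
        rw [← hf]; congr 1; ring
      rw [h1, hrefl (fun d => f d)]
      simp; ring
    rw [key, ih]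
    have hicc : Finset.Icc 1 (N+1) = insert (N+1) (Finset.Icc 1 N) :=
      (Finset.insert_Icc_right_eq_Icc_add_one (by omega)).symm
    rw [hicc, Finset.sum_insert (by simp)]
    push_cast
    have hcomb : ∑ d ∈ Finset.Icc 1 N, ((N:ℝ) - d) * (2 * f d)
        + ∑ d ∈ Finset.Icc 1 N, 2 * f d
        = ∑ d ∈ Finset.Icc 1 N, ((N:ℝ) + 1 - d) * (2 * f d) := by
      rw [← Finset.sum_add_distrib]
      apply Finset.sum_congr rfl
      intro d _; ring
    rw [show (2:ℝ) * ∑ d ∈ Finset.Icc 1 N, f ↑d = ∑ d ∈ Finset.Icc 1 N, 2 * f ↑d from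
      Finset.mul_sum _ _ _]
    linarith [hcomb]

lemma fejer (θ : ℝ) (n : ℕ) :
    0 ≤ ((n : ℝ) + 1) + ∑ d ∈ Finset.Icc 1 n,
      ((n : ℝ) + 1 - d) * (2 * Real.cos (2 * Real.pi * (d * θ))) := by
  set f : ℤ → ℝ := fun d => Real.cos (2 * Real.pi * (d * θ)) with hfdef
  have hf : ∀ d, f (-d) = f d := by
    intro d
    simp only [hfdef, Int.cast_neg]
    rw [show 2 * Real.pi * (-(d:ℝ) * θ) = -(2 * Real.pi * ((d:ℝ) * θ)) by ring, Real.cos_neg]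
  have key := evenSum f hf (n + 1)
  have hpos : 0 ≤ ∑ j ∈ Finset.range (n+1), ∑ k ∈ Finset.range (n+1), f ((j : ℤ) - k) := by
    have hterm : ∀ j k : ℕ, f ((j : ℤ) - k)
        = Real.cos (2 * Real.pi * (j * θ)) * Real.cos (2 * Real.pi * (k * θ))
          + Real.sin (2 * Real.pi * (j * θ)) * Real.sin (2 * Real.pi * (k * θ)) := by
      intro j k
      simp only [hfdef]
      push_cast
      rw [show 2 * Real.pi * (((j:ℝ) - k) * θ)
          = 2 * Real.pi * ((j:ℝ) * θ) - 2 * Real.pi * ((k:ℝ) * θ) by ring, Real.cos_sub]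
    simp only [hterm]
    have : ∑ j ∈ Finset.range (n+1), ∑ k ∈ Finset.range (n+1),
        (Real.cos (2 * Real.pi * (j * θ)) * Real.cos (2 * Real.pi * (k * θ))
          + Real.sin (2 * Real.pi * (j * θ)) * Real.sin (2 * Real.pi * (k * θ)))
        = (∑ j ∈ Finset.range (n+1), Real.cos (2 * Real.pi * (j * θ)))^2
          + (∑ j ∈ Finset.range (n+1), Real.sin (2 * Real.pi * (j * θ)))^2 := by
      rw [sq, sq, Finset.sum_mul_sum, Finset.sum_mul_sum, ← Finset.sum_add_distrib]
      apply Finset.sum_congr rfl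
      intro j _
      rw [← Finset.sum_add_distrib]
    rw [this]
    positivity
  rw [key] at hpos
  have h0 : f 0 = 1 := by simp [hfdef]
  rw [h0] at hpos
  have hicc : Finset.Icc 1 (n+1) = insert (n+1) (Finset.Icc 1 n) :=
    (Finset.insert_Icc_right_eq_Icc_add_one (by omega)).symm
  rw [hicc, Finset.sum_insert (by simp)] at hpos
  push_cast at hpos ⊢
  have hz : ((n:ℝ) + 1 - ((n:ℝ) + 1)) * (2 * f (↑n + 1)) = 0 := by ring
  calc (0:ℝ) ≤ _ := hpos
    _ = ((n : ℝ) + 1) + ∑ d ∈ Finset.Icc 1 n,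
        ((n : ℝ) + 1 - d) * (2 * Real.cos (2 * Real.pi * (d * θ))) := by
      simp only [hfdef]; push_cast; ring

lemma exp_add_exp_neg_re (x : ℝ) :
    (Complex.exp (2 * Real.pi * I * x) + Complex.exp (-(2 * Real.pi * I * x))).re
      = 2 * Real.cos (2 * Real.pi * x) := by
  rw [show (2 * Real.pi * I * (x:ℂ)) = ((2 * Real.pi * x : ℝ) : ℂ) * I by push_cast; ring]
  rw [show -(((2 * Real.pi * x : ℝ) : ℂ) * I) = ((-(2 * Real.pi * x) : ℝ) : ℂ) * I by
    push_cast; ring]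
  rw [Complex.add_re, Complex.exp_ofReal_mul_I_re, Complex.exp_ofReal_mul_I_re, Real.cos_neg]
  ring

lemma sum_abs_le (n : ℕ) (u : ℕ → ℝ) (hu : ∀ j, |u j| ≤ 1) :
    |∑ j ∈ Finset.Icc 1 n, (((n : ℝ) + 1 - j) / ((n : ℝ) + 1)) * (2 * u j)| ≤ 2 * n := by
  calc |∑ j ∈ Finset.Icc 1 n, (((n : ℝ) + 1 - j) / ((n : ℝ) + 1)) * (2 * u j)|
      ≤ ∑ j ∈ Finset.Icc 1 n, |(((n : ℝ) + 1 - j) / ((n : ℝ) + 1)) * (2 * u j)| :=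
        Finset.abs_sum_le_sum_abs _ _
    _ ≤ ∑ j ∈ Finset.Icc 1 n, 2 := by
        apply Finset.sum_le_sum
        intro j hj
        simp only [Finset.mem_Icc] at hj
        rw [abs_mul]
        have h1 : |((n : ℝ) + 1 - j) / ((n : ℝ) + 1)| ≤ 1 := by
          rw [abs_div, _root_.abs_of_nonneg (by positivity : (0:ℝ) ≤ (n:ℝ) + 1)]
          rw [div_le_one (by positivity)]
          rw [abs_le]
          constructor
          · have : (j : ℝ) ≤ (n : ℝ) := by exact_mod_cast hj.2
            linarith
          · have : (1 : ℝ) ≤ (j : ℝ) := by exact_mod_cast hj.1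
            linarith
        have h2 : |2 * u j| ≤ 2 := by
          rw [abs_mul, _root_.abs_two]
          nlinarith [hu j, abs_nonneg (u j)]
        nlinarith [abs_nonneg (2 * u j), abs_nonneg (((n : ℝ) + 1 - j) / ((n : ℝ) + 1))]
    _ = 2 * n := by simp [Nat.card_Icc]; ring

theorem stmt8 (a b : ℕ → ℝ)
    (ha : Tendsto (fun n => ((a n : ℝ) : AddCircle (1 : ℝ))) atTop (nhds 0))
    (hb : Tendsto (fun n => ((b n : ℝ) : AddCircle (1 : ℝ))) atTop (nhds 0)) :
    0 ≤ liminf (fun n : ℕ =>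
      (1 / (n : ℝ)) * ∑ j ∈ Finset.Icc 1 n, (((n : ℝ) + 1 - j) / ((n : ℝ) + 1)) *
        (Complex.exp (2 * Real.pi * I * (a n + j * b n))
          + Complex.exp (-(2 * Real.pi * I * (a n + j * b n)))).re) atTop := by
  haveI : Fact (0 < (1:ℝ)) := ⟨one_pos⟩
  set F : ℕ → ℝ := fun n : ℕ =>
      (1 / (n : ℝ)) * ∑ j ∈ Finset.Icc 1 n, (((n : ℝ) + 1 - j) / ((n : ℝ) + 1)) *
        (Complex.exp (2 * Real.pi * I * (a n + j * b n))
          + Complex.exp (-(2 * Real.pi * I * (a n + j * b n)))).re with hF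
  set c : ℕ → ℝ := fun n => Real.cos (2 * Real.pi * a n) with hcdef
  set s : ℕ → ℝ := fun n => Real.sin (2 * Real.pi * a n) with hsdef
  set C : ℕ → ℝ := fun n => ∑ j ∈ Finset.Icc 1 n,
      (((n : ℝ) + 1 - j) / ((n : ℝ) + 1)) * (2 * Real.cos (2 * Real.pi * (j * b n))) with hCdef
  set T : ℕ → ℝ := fun n => ∑ j ∈ Finset.Icc 1 n,
      (((n : ℝ) + 1 - j) / ((n : ℝ) + 1)) * (2 * Real.sin (2 * Real.pi * (j * b n))) with hTdef
  -- decomposition of F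
  have hFE : ∀ n : ℕ, F n = (1 / (n : ℝ)) * (c n * C n - s n * T n) := by
    intro n
    rw [hF]
    simp only
    congr 1
    rw [hCdef, hTdef]
    simp only [Finset.mul_sum, ← Finset.sum_sub_distrib]
    apply Finset.sum_congr rfl
    intro j _
    have hcast : ((a n : ℂ) + (j : ℂ) * (b n : ℂ)) = ((a n + j * b n : ℝ) : ℂ) := by push_cast; ring
    rw [hcast, exp_add_exp_neg_re]
    rw [show 2 * Real.pi * (a n + j * b n) = 2 * Real.pi * a n + 2 * Real.pi * (j * b n) by ring,
      Real.cos_add]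
    ring
  -- Fejér: C n ≥ -1
  have hCge : ∀ n : ℕ, -1 ≤ C n := by
    intro n
    have h := fejer (b n) n
    have hsum : C n = (1 / ((n:ℝ) + 1)) * ∑ d ∈ Finset.Icc 1 n,
        ((n : ℝ) + 1 - d) * (2 * Real.cos (2 * Real.pi * (d * b n))) := by
      rw [hCdef, Finset.mul_sum]
      apply Finset.sum_congr rfl
      intro d _
      field_simp
    rw [hsum]
    have h2 : -(((n:ℝ)+1)) ≤ ∑ d ∈ Finset.Icc 1 n,
        ((n : ℝ) + 1 - d) * (2 * Real.cos (2 * Real.pi * (d * b n))) := by linarith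
    calc (-1:ℝ) = (1 / ((n:ℝ) + 1)) * (-(((n:ℝ)+1))) := by field_simp
      _ ≤ _ := mul_le_mul_of_nonneg_left h2 (by positivity)
  -- bounds |C n| ≤ 2n, |T n| ≤ 2n
  have hCabs : ∀ n : ℕ, |C n| ≤ 2 * n := by
    intro n
    exact sum_abs_le n _ (fun j => by
      rw [abs_le]; exact ⟨Real.neg_one_le_cos _, Real.cos_le_one _⟩)
  have hTabs : ∀ n : ℕ, |T n| ≤ 2 * n := by
    intro n
    exact sum_abs_le n _ (fun j => by
      rw [abs_le]; exact ⟨Real.neg_one_le_sin _, Real.sin_le_one _⟩)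
  -- limits of c and s
  have h1 := ((fourier 1 : C(AddCircle (1:ℝ), ℂ)).continuous.tendsto
    (0 : AddCircle (1:ℝ))).comp ha
  have h2 : Tendsto (fun n => Complex.exp (2 * Real.pi * I * (a n : ℂ))) atTop (nhds 1) := by
    simp only [Function.comp_def, fourier_coe_apply, fourier_eval_zero, Int.cast_one, Complex.ofReal_one,
      mul_one, div_one] at h1
    exact h1
  have hre : ∀ x : ℝ, (Complex.exp (2 * Real.pi * I * (x:ℂ))).re = Real.cos (2 * Real.pi * x) := by
    intro x
    rw [show (2 * Real.pi * I * (x:ℂ)) = ((2 * Real.pi * x : ℝ) : ℂ) * I by push_cast; ring,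
      Complex.exp_ofReal_mul_I_re]
  have him : ∀ x : ℝ, (Complex.exp (2 * Real.pi * I * (x:ℂ))).im = Real.sin (2 * Real.pi * x) := by
    intro x
    rw [show (2 * Real.pi * I * (x:ℂ)) = ((2 * Real.pi * x : ℝ) : ℂ) * I by push_cast; ring,
      Complex.exp_ofReal_mul_I_im]
  have hc : Tendsto c atTop (nhds 1) := by
    have := (Complex.continuous_re.tendsto _).comp h2
    simp only [Function.comp_def, Complex.one_re] at this
    convert this using 2 with n
    rw [hcdef]
    exact (hre (a _)).symm
  have hs : Tendsto s atTop (nhds 0) := by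
    have := (Complex.continuous_im.tendsto _).comp h2
    simp only [Function.comp_def, Complex.one_im] at this
    convert this using 2 with n
    rw [hsdef]
    exact (him (a _)).symm
  -- the comparison function g
  set g : ℕ → ℝ := fun n => -(1 / (n:ℝ)) - 2 * |s n| with hgdef
  have hg : Tendsto g atTop (nhds 0) := by
    have h01 : Tendsto (fun n : ℕ => 1 / (n:ℝ)) atTop (nhds 0) :=
      tendsto_one_div_atTop_nhds_zero_nat
    have h02 : Tendsto (fun n => 2 * |s n|) atTop (nhds 0) := by
      have := (hs.abs).const_mul 2
      simpa using this
    have := (h01.neg).sub h02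
    simpa only [neg_zero, sub_zero, zero_sub, sub_self] using this
  -- eventual lower bound
  have hev : ∀ᶠ n in atTop, g n ≤ F n := by
    have hc0 : ∀ᶠ n in atTop, (0:ℝ) < c n := hc.eventually (eventually_gt_nhds one_pos)
    filter_upwards [hc0, eventually_ge_atTop 1] with n hcn hn1
    have hnR : (0:ℝ) < (n:ℝ) := by exact_mod_cast hn1
    rw [hFE n, hgdef]
    have hcle : c n ≤ 1 := Real.cos_le_one _
    have hkey : -1 - 2 * n * |s n| ≤ c n * C n - s n * T n := by
      have e1 : -(c n) ≤ c n * C n := by nlinarith [hCge n]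
      have e2 : -(s n * T n) ≥ -(2 * n * |s n|) := by
        have : s n * T n ≤ |s n| * |T n| := by
          calc s n * T n ≤ |s n * T n| := le_abs_self _
            _ = |s n| * |T n| := abs_mul _ _
        nlinarith [hTabs n, abs_nonneg (s n)]
      nlinarith
    calc -(1 / (n:ℝ)) - 2 * |s n| = (1 / (n:ℝ)) * (-1 - 2 * n * |s n|) := by
          field_simp
      _ ≤ (1 / (n:ℝ)) * (c n * C n - s n * T n) := by
          apply mul_le_mul_of_nonneg_left hkey (by positivity)
  -- eventual upper bound
  have hub : ∀ᶠ n in atTop, F n ≤ 4 := by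
    filter_upwards [eventually_ge_atTop 1] with n hn1
    have hnR : (0:ℝ) < (n:ℝ) := by exact_mod_cast hn1
    rw [hFE n]
    have h1' : c n * C n - s n * T n ≤ 4 * n := by
      have e1 : c n * C n ≤ |c n| * |C n| := by
        calc c n * C n ≤ |c n * C n| := le_abs_self _
          _ = |c n| * |C n| := abs_mul _ _
      have e2 : -(s n * T n) ≤ |s n| * |T n| := by
        calc -(s n * T n) ≤ |s n * T n| := neg_le_abs _
          _ = |s n| * |T n| := abs_mul _ _
      have hca : |c n| ≤ 1 := by rw [abs_le]; exact ⟨Real.neg_one_le_cos _, Real.cos_le_one _⟩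
      have hsa : |s n| ≤ 1 := by rw [abs_le]; exact ⟨Real.neg_one_le_sin _, Real.sin_le_one _⟩
      nlinarith [hCabs n, hTabs n, abs_nonneg (C n), abs_nonneg (T n), abs_nonneg (c n),
        abs_nonneg (s n)]
    calc (1 / (n:ℝ)) * (c n * C n - s n * T n) ≤ (1 / (n:ℝ)) * (4 * n) :=
        mul_le_mul_of_nonneg_left h1' (by positivity)
      _ = 4 := by field_simp
  -- conclude
  have hgbd : IsBoundedUnder (· ≥ ·) atTop g := hg.isBoundedUnder_ge
  have hFcb : IsCoboundedUnder (· ≥ ·) atTop F :=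
    isCoboundedUnder_ge_of_eventually_le atTop hub
  calc (0:ℝ) = liminf g atTop := (hg.liminf_eq).symm
    _ ≤ liminf F atTop := liminf_le_liminf hev hgbd hFcb
end
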